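/- For every finite planar rooted tree Γ: every nontrivial rightmost branch of Γ contains exactly one leaf; the map assigning to each nontrivial rightmost branch its vertex nearest to the root is a bijection from the set of nontrivial rightmost branches onto the set R(Γ) of subroots; and the map assigning to each nontrivial rightmost branch its unique leaf is a bijection from the set of nontrivial rightmost branches onto the set of local rightmost leaves of Γ. -/

import Mathlib

/-- A finite planar rooted tree in which every internal vertex has at least two
children: a vertex is either a leaf, or a node with children `a :: b :: r`
(ordered from left to right). -/
inductive PTree : Type
  | leaf : PTree
  | node : PTree → PTree → List PTree → PTree

namespace PTree

/-- The ordered list of children (subtrees) of the root. -/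
def childrenL : PTree → List PTree
  | leaf => []
  | node a b r => a :: b :: r

/-- The subtree at a given path (a vertex is encoded by the list of child indices,
read from the root). -/
def subtreeAt : List ℕ → PTree → Option PTree
  | [], t => some t
  | i :: p, t =>
      match (childrenL t)[i]? with
      | some c => subtreeAt p c
      | none => none

/-- `p` is a vertex of `t`. -/
def IsVertex (t : PTree) (p : List ℕ) : Prop := (subtreeAt p t).isSome

/-- `p` is a leaf of `t`. -/
def IsLeafV (t : PTree) (p : List ℕ) : Prop := subtreeAt p t = some leaf

/-- `p` is an internal vertex of `t`. -/
def IsInternalV (t : PTree) (p : List ℕ) : Prop :=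
  ∃ a b r, subtreeAt p t = some (node a b r)

/-- The number of children of the vertex `p`. -/
def childCount (t : PTree) (p : List ℕ) : ℕ :=
  ((subtreeAt p t).map fun s => (childrenL s).length).getD 0

/-- The rightmost edge out of the internal vertex `p`, i.e. the edge joining `p` to its
last child `q` (edges are directed towards the root, so the edge is `q → p`). -/
def Redge (t : PTree) (p q : List ℕ) : Prop :=
  IsInternalV t p ∧ q = p ++ [childCount t p - 1] ∧ IsVertex t q

/-- The vertex set `B` is connected through rightmost edges of `t` lying inside `B`. -/
def ConnB (t : PTree) (B : Set (List ℕ)) : Prop :=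
  ∀ p ∈ B, ∀ q ∈ B,
    Relation.ReflTransGen (fun x y => (Redge t x y ∨ Redge t y x) ∧ x ∈ B ∧ y ∈ B) p q

/-- `B` is (the vertex set of) a rightmost branch of `t`: a maximal connected subgraph
all of whose edges are rightmost edges of `t`. -/
def IsRBranch (t : PTree) (B : Set (List ℕ)) : Prop :=
  B.Nonempty ∧ (∀ p ∈ B, IsVertex t p) ∧ ConnB t B ∧
    ∀ B', B ⊆ B' → (∀ p ∈ B', IsVertex t p) → ConnB t B' → B' = B

/-- A rightmost branch is nontrivial if it has at least two vertices. -/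
def NontrivB (B : Set (List ℕ)) : Prop := ∃ p ∈ B, ∃ q ∈ B, p ≠ q

/-- `v` is the vertex of `B` nearest to the root. -/
def IsTop (B : Set (List ℕ)) (v : List ℕ) : Prop :=
  v ∈ B ∧ ∀ u ∈ B, v.length ≤ u.length

/-- `v` is a subroot of `t`: the vertex of a nontrivial rightmost branch nearest to
the root. -/
def IsSubroot (t : PTree) (v : List ℕ) : Prop :=
  ∃ B, IsRBranch t B ∧ NontrivB B ∧ IsTop B v

/-- One step towards `m(v)`: pass to the last child. -/
def mstep (t : PTree) (v : List ℕ) : List ℕ := v ++ [childCount t v - 1]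

/-- Auxiliary fuelled recursion computing `m(v)`. -/
def mpathAux (t : PTree) : ℕ → List ℕ → List ℕ
  | 0, v => v
  | n + 1, v => if childCount t v = 0 then v else mpathAux t n (mstep t v)

/-- The leaf `m(v)` reached from the vertex `v` by repeatedly passing to the last
child (the fuel `sizeOf t` is larger than the height of `t`, so the iteration always
reaches the leaf). -/
noncomputable def mpath (t : PTree) (v : List ℕ) : List ℕ := mpathAux t (sizeOf t) v

/-- `d(v)`: the number of edges on the path from `v` to `m(v)`. -/
noncomputable def dd (t : PTree) (v : List ℕ) : ℕ := (mpath t v).length - v.length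

/-- The number of leaves of `t`. -/
noncomputable def numLeavesP (t : PTree) : ℕ := {p | IsLeafV t p}.ncard

/-- The partial order `⪯` on the leaves of `t`: `l₁ ⪯ l₂` iff `l₁ = l₂` or there is a
subroot `v` with `l₂ = m(v)` and `l₁ → v` (i.e. `v` lies on the path from `l₁` to the
root, i.e. `v` is a prefix of `l₁`). -/
def leafLe (t : PTree) (l₁ l₂ : List ℕ) : Prop :=
  l₁ = l₂ ∨ ∃ v, IsSubroot t v ∧ l₂ = mpath t v ∧ v <+: l₁

/-- `t` is a binary tree: every internal vertex has exactly two children. -/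
def IsBinary (t : PTree) : Prop := ∀ p, IsInternalV t p → childCount t p = 2

/-! ### Auxiliary development -/

/-- Symmetric-closure reachability through rightmost edges. -/
def Reach (t : PTree) : List ℕ → List ℕ → Prop :=
  Relation.ReflTransGen (fun p q => Redge t p q ∨ Redge t q p)

/-- The connected component of `p` under rightmost edges. -/
def comp (t : PTree) (p : List ℕ) : Set (List ℕ) := {q | Reach t p q}

/-- `v` is a vertex with no rightmost edge coming into it from above. -/
def IsTopV (t : PTree) (v : List ℕ) : Prop := IsVertex t v ∧ ¬∃ u, Redge t u v

/-- The `mstep`-orbit of `v` (restricted to vertices). -/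
def orb (t : PTree) (v : List ℕ) : Set (List ℕ) :=
  {q | IsVertex t q ∧ ∃ n, q = (mstep t)^[n] v}

lemma subtreeAt_append (p q : List ℕ) (t : PTree) :
    subtreeAt (p ++ q) t = (subtreeAt p t).bind (subtreeAt q) := by
  induction p generalizing t with
  | nil => simp [subtreeAt]
  | cons i p ih =>
    simp only [List.cons_append, subtreeAt]
    cases (childrenL t)[i]? with
    | none => simp [subtreeAt]
    | some c => simp [ih]

lemma isVertex_prefix {t : PTree} {p q : List ℕ} (h : IsVertex t (p ++ q)) :
    IsVertex t p := by
  unfold IsVertex at *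
  rw [subtreeAt_append] at h
  cases hs : subtreeAt p t with
  | none => rw [hs] at h; simp at h
  | some s => simp

lemma internal_isVertex {t : PTree} {p : List ℕ} (h : IsInternalV t p) :
    IsVertex t p := by
  obtain ⟨a, b, r, hs⟩ := h
  unfold IsVertex; rw [hs]; rfl

lemma redge_mstep {t : PTree} {p q : List ℕ} (h : Redge t p q) : q = mstep t p :=
  h.2.1

lemma mstep_length (t : PTree) (v : List ℕ) :
    (mstep t v).length = v.length + 1 := by
  simp [mstep]

lemma iter_length (t : PTree) (v : List ℕ) (n : ℕ) :
    ((mstep t)^[n] v).length = v.length + n := by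
  induction n with
  | zero => simp
  | succ k ih => rw [Function.iterate_succ_apply', mstep_length, ih]; omega

lemma self_prefix_iter (t : PTree) (v : List ℕ) (k : ℕ) :
    v <+: (mstep t)^[k] v := by
  induction k generalizing v with
  | zero => exact List.prefix_refl v
  | succ k ih =>
    rw [Function.iterate_succ_apply]
    exact List.IsPrefix.trans ⟨[childCount t v - 1], rfl⟩ (ih (mstep t v))

lemma iter_prefix (t : PTree) (v : List ℕ) {m n : ℕ} (h : m ≤ n) :
    (mstep t)^[m] v <+: (mstep t)^[n] v := by
  obtain ⟨k, rfl⟩ := Nat.exists_eq_add_of_le h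
  rw [Nat.add_comm, Function.iterate_add_apply]
  exact self_prefix_iter t _ k

lemma vertex_of_leaf_prefix {t : PTree} {l q : List ℕ}
    (hl : subtreeAt l t = some PTree.leaf) (hq : IsVertex t q) (hpre : l <+: q) :
    q = l := by
  obtain ⟨s, rfl⟩ := hpre
  cases s with
  | nil => exact List.append_nil l
  | cons i s' =>
    exfalso
    unfold IsVertex at hq
    rw [subtreeAt_append, hl, Option.bind_some] at hq
    simp [subtreeAt, childrenL] at hq

lemma one_le_sizeOf (s : PTree) : 1 ≤ sizeOf s := by
  cases s with
  | leaf => rw [PTree.leaf.sizeOf_spec]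
  | node a b r => rw [PTree.node.sizeOf_spec]; omega

lemma sizeOf_bound {t s : PTree} {p : List ℕ} (h : subtreeAt p t = some s) :
    p.length + sizeOf s ≤ sizeOf t := by
  induction p generalizing t with
  | nil =>
    simp only [subtreeAt, Option.some.injEq] at h
    subst h; simp
  | cons i p ih =>
    simp only [subtreeAt] at h
    cases hc : (childrenL t)[i]? with
    | none => rw [hc] at h; simp at h
    | some c =>
      rw [hc] at h
      have hmem : c ∈ childrenL t := List.mem_of_getElem? hc
      have hlt : sizeOf c < sizeOf t := by
        cases t with
        | leaf => simp [childrenL] at hmem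
        | node a b r =>
          simp only [childrenL, List.mem_cons] at hmem
          have : sizeOf (PTree.node a b r) = 1 + sizeOf a + sizeOf b + sizeOf r := by
            simp
          rcases hmem with rfl | rfl | hm
          · omega
          · omega
          · have := List.sizeOf_lt_of_mem hm
            omega
      have := ih h
      simp only [List.length_cons]
      omega

lemma vertex_length_lt {t : PTree} {p : List ℕ} (h : IsVertex t p) :
    p.length < sizeOf t := by
  obtain ⟨s, hs⟩ := Option.isSome_iff_exists.mp h
  have := sizeOf_bound hs
  have := one_le_sizeOf s
  omega

lemma vertex_child {t : PTree} {p : List ℕ} {s : PTree} (hs : subtreeAt p t = some s)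
    {j : ℕ} (hj : j < (childrenL s).length) : IsVertex t (p ++ [j]) := by
  unfold IsVertex
  rw [subtreeAt_append, hs, Option.bind_some]
  have hc : (childrenL s)[j]? = some ((childrenL s)[j]'hj) := List.getElem?_eq_getElem hj
  simp only [subtreeAt]
  rw [hc]
  rfl

lemma internal_redge {t : PTree} {p : List ℕ} (h : IsInternalV t p) :
    Redge t p (mstep t p) := by
  obtain ⟨a, b, r, hs⟩ := h
  have hcc : childCount t p = r.length + 2 := by
    simp [childCount, hs, childrenL]
  refine ⟨⟨a, b, r, hs⟩, rfl, vertex_child hs ?_⟩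
  simp only [childrenL, List.length_cons]
  omega

lemma vertex_cases {t : PTree} {p : List ℕ} (h : IsVertex t p) :
    subtreeAt p t = some PTree.leaf ∨ IsInternalV t p := by
  obtain ⟨s, hs⟩ := Option.isSome_iff_exists.mp h
  cases s with
  | leaf => exact Or.inl hs
  | node a b r => exact Or.inr ⟨a, b, r, hs⟩

lemma reach_symm {t : PTree} {p q : List ℕ} (h : Reach t p q) : Reach t q p := by
  have hsym : Symmetric (fun p q => Redge t p q ∨ Redge t q p) := fun x y h => h.symm
  exact (letI : Std.Symm (fun p q => Redge t p q ∨ Redge t q p) := ⟨hsym⟩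
    Std.Symm.symm (r := Relation.ReflTransGen (fun p q => Redge t p q ∨ Redge t q p)) _ _ h)

lemma reach_vertex {t : PTree} {p q : List ℕ} (hp : IsVertex t p) (h : Reach t p q) :
    IsVertex t q := by
  induction h with
  | refl => exact hp
  | tail hab hbc ih =>
    rcases hbc with h | h
    · exact h.2.2
    · exact internal_isVertex h.1

lemma comp_eq_of_reach {t : PTree} {p q : List ℕ} (h : Reach t p q) :
    comp t p = comp t q := by
  ext x
  constructor
  · intro hx; exact Relation.ReflTransGen.trans (reach_symm h) hx
  · intro hx; exact Relation.ReflTransGen.trans h hx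

lemma restricted_path {t : PTree} {p q : List ℕ} (h : Reach t p q) :
    Relation.ReflTransGen
      (fun x y => (Redge t x y ∨ Redge t y x) ∧ x ∈ comp t p ∧ y ∈ comp t p) p q := by
  induction h with
  | refl => exact Relation.ReflTransGen.refl
  | @tail b c hab hbc ih =>
    exact ih.tail ⟨hbc, hab, hab.tail hbc⟩

lemma connB_comp (t : PTree) (p : List ℕ) : ConnB t (comp t p) := by
  intro q hq r hr
  have hsym : Symmetric
      (fun x y => (Redge t x y ∨ Redge t y x) ∧ x ∈ comp t p ∧ y ∈ comp t p) :=
    fun x y h => ⟨h.1.symm, h.2.2, h.2.1⟩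
  have h1 := restricted_path hq
  have h2 := restricted_path hr
  letI hS : Std.Symm (fun x y => (Redge t x y ∨ Redge t y x) ∧ x ∈ comp t p ∧ y ∈ comp t p) :=
    ⟨hsym⟩
  exact Relation.ReflTransGen.trans (Std.Symm.symm (r := Relation.ReflTransGen
      (fun x y => (Redge t x y ∨ Redge t y x) ∧ x ∈ comp t p ∧ y ∈ comp t p)) _ _ h1) h2

lemma branch_eq_comp {t : PTree} {B : Set (List ℕ)} {p : List ℕ}
    (hB : IsRBranch t B) (hp : p ∈ B) : B = comp t p := by
  obtain ⟨-, hv, hc, hmax⟩ := hB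
  have hsub : B ⊆ comp t p := by
    intro q hq
    exact Relation.ReflTransGen.mono (p := fun p q => Redge t p q ∨ Redge t q p)
      (fun x y h => h.1) _ _ (hc p hp q hq)
  exact (hmax (comp t p) hsub (fun q hq => reach_vertex (hv p hp) hq) (connB_comp t p)).symm

lemma top_exists {t : PTree} {p : List ℕ} (hp : IsVertex t p) :
    ∃ v, IsTopV t v ∧ Reach t v p := by
  generalize hn : p.length = n
  induction n using Nat.strong_induction_on generalizing p with
  | _ n ih =>
    by_cases h : ∃ u, Redge t u p
    · obtain ⟨u, hu⟩ := h
      have hq : p = u ++ [childCount t u - 1] := hu.2.1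
      have hulen : u.length < n := by rw [← hn, hq]; simp
      have huv : IsVertex t u := internal_isVertex hu.1
      obtain ⟨v, hvt, hvu⟩ := ih u.length hulen huv rfl
      exact ⟨v, hvt, hvu.tail (Or.inl hu)⟩
    · exact ⟨p, ⟨hp, h⟩, Relation.ReflTransGen.refl⟩

lemma iter_vertex_reach {t : PTree} {v : List ℕ} :
    ∀ n, IsVertex t ((mstep t)^[n] v) → Reach t v ((mstep t)^[n] v) := by
  intro n
  induction n with
  | zero => intro _; exact Relation.ReflTransGen.refl
  | succ k ih =>
    intro hv1
    have hpre : (mstep t)^[k] v <+: (mstep t)^[k+1] v := iter_prefix t v (Nat.le_succ k)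
    have hkv : IsVertex t ((mstep t)^[k] v) := by
      obtain ⟨s, hs⟩ := hpre
      rw [← hs] at hv1
      exact isVertex_prefix hv1
    have hint : IsInternalV t ((mstep t)^[k] v) := by
      rcases vertex_cases hkv with hl | hi
      · exfalso
        have := vertex_of_leaf_prefix hl hv1 hpre
        have h1 := iter_length t v k
        have h2 := iter_length t v (k + 1)
        rw [this] at h2
        omega
      · exact hi
    have hv1' : IsVertex t (mstep t ((mstep t)^[k] v)) := by
      rwa [Function.iterate_succ_apply'] at hv1
    have hedge : Redge t ((mstep t)^[k] v) (mstep t ((mstep t)^[k] v)) :=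
      ⟨hint, rfl, hv1'⟩
    rw [Function.iterate_succ_apply']
    exact (ih hkv).tail (Or.inl hedge)

lemma comp_subset_orb {t : PTree} {v : List ℕ} (hv : IsTopV t v) :
    comp t v ⊆ orb t v := by
  intro q hq
  induction hq with
  | refl => exact ⟨hv.1, 0, rfl⟩
  | @tail b c hab hbc ih =>
    obtain ⟨hbv, n, hn⟩ := ih
    rcases hbc with h | h
    · refine ⟨h.2.2, n + 1, ?_⟩
      rw [Function.iterate_succ_apply', ← hn, redge_mstep h]
    · -- h : Redge t c b
      cases n with
      | zero =>
        exfalso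
        rw [hn] at h
        exact hv.2 ⟨c, h⟩
      | succ k =>
        have hb1 : b = mstep t c := redge_mstep h
        have hb2 : b = mstep t ((mstep t)^[k] v) := by
          rw [hn, Function.iterate_succ_apply']
        have h1 : c ++ [childCount t c - 1] =
            (mstep t)^[k] v ++ [childCount t ((mstep t)^[k] v) - 1] := by
          have := hb1.symm.trans hb2
          simpa [mstep] using this
        have hc : c = (mstep t)^[k] v := (List.append_inj' h1 rfl).1
        exact ⟨internal_isVertex h.1, k, hc⟩

/-- The orbit of a top vertex is its component. -/
lemma comp_eq_orb {t : PTree} {v : List ℕ} (hv : IsTopV t v) :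
    comp t v = orb t v := by
  apply subset_antisymm (comp_subset_orb hv)
  rintro q ⟨hqv, n, rfl⟩
  exact iter_vertex_reach n hqv

/-- Every rightmost branch is the orbit of a top vertex. -/
lemma branch_struct {t : PTree} {B : Set (List ℕ)} (hB : IsRBranch t B) :
    ∃ v, IsTopV t v ∧ B = orb t v := by
  obtain ⟨p, hp⟩ := hB.1
  have hpv := hB.2.1 p hp
  obtain ⟨v, hvt, hvp⟩ := top_exists hpv
  refine ⟨v, hvt, ?_⟩
  rw [branch_eq_comp hB hp, ← comp_eq_of_reach hvp, comp_eq_orb hvt]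

lemma leaf_exists {t : PTree} {v : List ℕ} (hv : IsVertex t v) :
    ∃ n, subtreeAt ((mstep t)^[n] v) t = some PTree.leaf := by
  suffices h : ∀ k n, IsVertex t ((mstep t)^[n] v) →
      sizeOf t ≤ v.length + n + k →
      ∃ m, subtreeAt ((mstep t)^[m] v) t = some PTree.leaf by
    exact h (sizeOf t) 0 hv (by omega)
  intro k
  induction k with
  | zero =>
    intro n hn hle
    exfalso
    have := vertex_length_lt hn
    rw [iter_length] at this
    omega
  | succ k ih =>
    intro n hn hle
    rcases vertex_cases hn with hl | hi
    · exact ⟨n, hl⟩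
    · have hedge := internal_redge hi
      have : IsVertex t ((mstep t)^[n+1] v) := by
        rw [Function.iterate_succ_apply']
        exact hedge.2.2
      exact ih (n + 1) this (by omega)

/-- In an orbit, there is exactly one leaf. -/
lemma orb_unique_leaf {t : PTree} {v : List ℕ} (hv : IsTopV t v) :
    ∃! l, l ∈ orb t v ∧ IsLeafV t l := by
  obtain ⟨n, hn⟩ := leaf_exists hv.1
  refine ⟨(mstep t)^[n] v, ⟨⟨by unfold IsVertex; rw [hn]; rfl, n, rfl⟩, hn⟩, ?_⟩
  rintro l ⟨⟨hlv, m, rfl⟩, hl⟩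
  rcases Nat.le_total m n with h | h
  · have := vertex_of_leaf_prefix hl (by unfold IsVertex; rw [hn]; rfl) (iter_prefix t v h)
    exact this.symm
  · have := vertex_of_leaf_prefix hn hlv (iter_prefix t v h)
    exact this

lemma orb_unique_top {t : PTree} {v : List ℕ} (hv : IsTopV t v) :
    ∃! u, IsTop (orb t v) u := by
  have hvmem : v ∈ orb t v := ⟨hv.1, 0, rfl⟩
  refine ⟨v, ⟨hvmem, ?_⟩, ?_⟩
  · rintro u ⟨huv, n, rfl⟩
    rw [iter_length]; omega
  · rintro u ⟨⟨huv, n, rfl⟩, hmin⟩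
    have := hmin v hvmem
    rw [iter_length] at this
    have hn0 : n = 0 := by omega
    rw [hn0]; rfl

end PTree

open PTree in
/-- **Theorem.** For every finite planar rooted tree `Γ`:
* every nontrivial rightmost branch of `Γ` contains exactly one leaf;
* assigning to each nontrivial rightmost branch its vertex nearest to the root is a
  bijection from the set of nontrivial rightmost branches onto the set `R(Γ)` of
  subroots (each branch has a unique nearest-to-the-root vertex, which is a subroot by
  definition, and each subroot is the top of a unique nontrivial rightmost branch);
* assigning to each nontrivial rightmost branch its unique leaf is a bijection from the
  set of nontrivial rightmost branches onto the set of local rightmost leaves (each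
  local rightmost leaf lies on a unique nontrivial rightmost branch). -/
theorem rightmost_branch_bijections (t : PTree) :
    (∀ B, IsRBranch t B → NontrivB B → ∃! l, l ∈ B ∧ IsLeafV t l) ∧
    (∀ B, IsRBranch t B → NontrivB B → ∃! v, IsTop B v) ∧
    (∀ v, IsSubroot t v → ∃! B, IsRBranch t B ∧ NontrivB B ∧ IsTop B v) ∧
    (∀ l, IsLeafV t l → (∃ B, IsRBranch t B ∧ NontrivB B ∧ l ∈ B) →
      ∃! B, IsRBranch t B ∧ NontrivB B ∧ l ∈ B) := by
  refine ⟨?_, ?_, ?_, ?_⟩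
  · intro B hB _
    obtain ⟨v, hvt, rfl⟩ := branch_struct hB
    exact orb_unique_leaf hvt
  · intro B hB _
    obtain ⟨v, hvt, rfl⟩ := branch_struct hB
    exact orb_unique_top hvt
  · intro v hv
    obtain ⟨B₀, hB₀⟩ := hv
    refine ⟨B₀, hB₀, ?_⟩
    intro B hB
    rw [branch_eq_comp hB.1 hB.2.2.1, branch_eq_comp hB₀.1 hB₀.2.2.1]
  · rintro l _ ⟨B₀, hB₀⟩
    refine ⟨B₀, hB₀, ?_⟩
    intro B hB
    rw [branch_eq_comp hB.1 hB.2.2, branch_eq_comp hB₀.1 hB₀.2.2]
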